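/- Consider in ℝ³ the problem: minimize x₃ subject to g₁(x) := cos(x₁+x₂) − x₃ − 1 ≤ 0, g₂(x) := −cos(x₁+x₂) − x₃ + 1 ≤ 0, g₃(x) := −2x₃ ≤ 0, and let x* = (0,0,0). Then x* is a local minimizer at which MFCQ holds, Λ(x*) = {μ ∈ ℝ³₊ : μ₁ + μ₂ + 2μ₃ = 1}, S(x*) = {d ∈ ℝ³ : d₃ = 0}, and a multiplier μ ∈ Λ(x*) satisfies dᵀ∇²ₓₓL(x*,μ)d ≥ 0 for all d ∈ S(x*) if and only if μ₂ ≥ μ₁; in particular WSOC holds at x*. -/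

import Mathlib

/-! The objective, the constraints and hence every Lagrangian have the form
`x ↦ a cos (x₀ + x₁) + m x + b` with `m` linear. At the origin the gradient of such a function
is `m` and its Hessian form is `d ↦ -a (d₀ + d₁)²`, so `Λ(x*)` and `S(x*)` are read off the
linear parts, while the Lagrangian of `μ` has Hessian form `(μ₁ - μ₀) (d₀ + d₁)²`, which does not
see the constraint `d₂ = 0` defining `S(x*)`. Minimality is global: `g₁ ≤ 0` forces
`x₂ ≥ 1 - cos (x₀ + x₁) ≥ 0`. -/

open scoped BigOperators
open Matrix

attribute [local instance] Classical.propDecidable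

noncomputable section

/-- The quadratic form `d ↦ dᵀ ∇²φ(x) d` of the Hessian of `φ` at `x`. -/
def hessQ {n : ℕ} (φ : (Fin n → ℝ) → ℝ) (x d : Fin n → ℝ) : ℝ :=
  iteratedFDeriv ℝ 2 φ x ![d, d]

/-- Feasibility for an inequality-constrained problem. -/
def FeasI {n p : ℕ} (g : Fin p → (Fin n → ℝ) → ℝ) (x : Fin n → ℝ) : Prop :=
  ∀ j, g j x ≤ 0

/-- The Lagrangian of an inequality-constrained problem. -/
def LagrI {n p : ℕ} (f : (Fin n → ℝ) → ℝ) (g : Fin p → (Fin n → ℝ) → ℝ)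
    (mu : Fin p → ℝ) (x : Fin n → ℝ) : ℝ :=
  f x + ∑ j, mu j * g j x

/-- `mu` is a Lagrange multiplier at `xs`, i.e. `mu ∈ Λ(xs)`. -/
def IsLagMultI {n p : ℕ} (f : (Fin n → ℝ) → ℝ) (g : Fin p → (Fin n → ℝ) → ℝ)
    (xs : Fin n → ℝ) (mu : Fin p → ℝ) : Prop :=
  (∀ j, 0 ≤ mu j) ∧ fderiv ℝ (LagrI f g mu) xs = 0 ∧ ∀ j, mu j * g j xs = 0

/-- MFCQ for an inequality-constrained problem. -/
def MFCQI {n p : ℕ} (g : Fin p → (Fin n → ℝ) → ℝ) (xs : Fin n → ℝ) : Prop :=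
  ∃ d : Fin n → ℝ, ∀ j, g j xs = 0 → fderiv ℝ (g j) xs d < 0

/-- Membership in the critical subspace `S(xs)`. -/
def critSubI {n p : ℕ} (g : Fin p → (Fin n → ℝ) → ℝ) (xs d : Fin n → ℝ) : Prop :=
  ∀ j, g j xs = 0 → fderiv ℝ (g j) xs d = 0

/-- Objective of the cosine example. -/
def f16 : (Fin 3 → ℝ) → ℝ := fun x => x 2

/-- Constraints of the cosine example. -/
def g16 : Fin 3 → (Fin 3 → ℝ) → ℝ :=
  ![fun x => Real.cos (x 0 + x 1) - x 2 - 1,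
    fun x => -Real.cos (x 0 + x 1) - x 2 + 1,
    fun x => -2 * x 2]

section CosAffine

variable {E : Type*} [NormedAddCommGroup E] [NormedSpace ℝ E]

def cosAffine (ℓ m : E →L[ℝ] ℝ) (a b : ℝ) : E → ℝ :=
  fun x => a * Real.cos (ℓ x) + m x + b

variable (ℓ m : E →L[ℝ] ℝ) (a b : ℝ)

theorem hasFDerivAt_cosAffine (x : E) :
    HasFDerivAt (cosAffine ℓ m a b) ((-a * Real.sin (ℓ x)) • ℓ + m) x := by
  have hcos : HasFDerivAt (fun x => Real.cos (ℓ x)) (-Real.sin (ℓ x) • ℓ) x :=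
    (Real.hasDerivAt_cos (ℓ x)).comp_hasFDerivAt x ℓ.hasFDerivAt
  refine (((hcos.const_mul a).add m.hasFDerivAt).add_const b).congr_fderiv ?_
  rw [smul_smul, mul_neg, neg_mul]

theorem fderiv_cosAffine :
    fderiv ℝ (cosAffine ℓ m a b) = fun x => (-a * Real.sin (ℓ x)) • ℓ + m :=
  funext fun x => (hasFDerivAt_cosAffine ℓ m a b x).fderiv

theorem fderiv_fderiv_cosAffine_apply (x d : E) :
    fderiv ℝ (fderiv ℝ (cosAffine ℓ m a b)) x d d = -a * Real.cos (ℓ x) * ℓ d ^ 2 := by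
  have hsin : HasFDerivAt (fun x => Real.sin (ℓ x)) (Real.cos (ℓ x) • ℓ) x :=
    (Real.hasDerivAt_sin (ℓ x)).comp_hasFDerivAt x ℓ.hasFDerivAt
  have hderiv := ((hsin.const_mul (-a)).smul_const ℓ).add_const m
  rw [fderiv_cosAffine, hderiv.fderiv]
  simp only [ContinuousLinearMap.smulRight_apply, _root_.smul_apply, smul_eq_mul]
  ring

theorem fderiv_cosAffine_of_eq_zero {x : E} (hx : ℓ x = 0) :
    fderiv ℝ (cosAffine ℓ m a b) x = m := by
  simp [fderiv_cosAffine, hx]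

end CosAffine

theorem hessQ_cosAffine {n : ℕ} (ℓ m : (Fin n → ℝ) →L[ℝ] ℝ) (a b : ℝ) (x d : Fin n → ℝ) :
    hessQ (cosAffine ℓ m a b) x d = -a * Real.cos (ℓ x) * ℓ d ^ 2 := by
  rw [hessQ, iteratedFDeriv_two_apply]
  exact fderiv_fderiv_cosAffine_apply ℓ m a b x d

def coordCLM (i : Fin 3) : (Fin 3 → ℝ) →L[ℝ] ℝ := ContinuousLinearMap.proj i

def coordSum01 : (Fin 3 → ℝ) →L[ℝ] ℝ := coordCLM 0 + coordCLM 1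

theorem g16_eq :
    g16 = ![cosAffine coordSum01 (-coordCLM 2) 1 (-1),
      cosAffine coordSum01 (-coordCLM 2) (-1) 1,
      cosAffine coordSum01 (-2 • coordCLM 2) 0 0] := by
  ext j x
  fin_cases j <;> simp [g16, cosAffine, coordSum01, coordCLM] <;> ring

theorem lagrI_f16_g16 (mu : Fin 3 → ℝ) :
    LagrI f16 g16 mu = cosAffine coordSum01 ((1 - mu 0 - mu 1 - 2 * mu 2) • coordCLM 2)
      (mu 0 - mu 1) (mu 1 - mu 0) := by
  ext x
  simp [LagrI, f16, g16, cosAffine, coordSum01, coordCLM, Fin.sum_univ_three]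
  ring

theorem g16_apply_zero (j : Fin 3) : g16 j 0 = 0 := by
  fin_cases j <;> simp [g16]

theorem fderiv_g16_zero_apply (j : Fin 3) (d : Fin 3 → ℝ) :
    fderiv ℝ (g16 j) 0 d = ![-1, -1, -2] j * d 2 := by
  rw [g16_eq]
  fin_cases j <;> simp [fderiv_cosAffine_of_eq_zero, coordSum01, coordCLM]

theorem hessQ_lagrI_f16_g16 (mu d : Fin 3 → ℝ) :
    hessQ (LagrI f16 g16 mu) 0 d = (mu 1 - mu 0) * (d 0 + d 1) ^ 2 := by
  rw [lagrI_f16_g16, hessQ_cosAffine]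
  simp [coordSum01, coordCLM]

theorem critSubI_g16_zero_iff (d : Fin 3 → ℝ) : critSubI g16 0 d ↔ d 2 = 0 := by
  refine ⟨fun h => ?_, fun hd j _ => by rw [fderiv_g16_zero_apply, hd, mul_zero]⟩
  simpa [fderiv_g16_zero_apply] using h 2 (g16_apply_zero 2)

theorem isLagMultI_f16_g16_zero_iff (mu : Fin 3 → ℝ) :
    IsLagMultI f16 g16 0 mu ↔ (∀ j, 0 ≤ mu j) ∧ mu 0 + mu 1 + 2 * mu 2 = 1 := by
  have hderiv : fderiv ℝ (LagrI f16 g16 mu) 0 =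
      (1 - mu 0 - mu 1 - 2 * mu 2) • coordCLM 2 := by
    rw [lagrI_f16_g16, fderiv_cosAffine_of_eq_zero]
    exact map_zero _
  have hzero : fderiv ℝ (LagrI f16 g16 mu) 0 = 0 ↔ mu 0 + mu 1 + 2 * mu 2 = 1 := by
    rw [hderiv]
    constructor
    · intro h
      have := congr($h (Pi.single 2 1))
      simp [coordCLM] at this
      linarith
    · intro h
      rw [show 1 - mu 0 - mu 1 - 2 * mu 2 = 0 by linarith, zero_smul]
  simp only [IsLagMultI, hzero, g16_apply_zero, mul_zero, implies_true, and_true]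

theorem isMinOn_f16_zero : IsMinOn f16 {x | FeasI g16 x} 0 := by
  intro x hx
  have hx1 : -Real.cos (x 0 + x 1) - x 2 + 1 ≤ 0 := hx 1
  have := Real.cos_le_one (x 0 + x 1)
  show 0 ≤ x 2
  linarith

theorem mfcqI_g16_zero : MFCQI g16 0 :=
  ⟨Pi.single 2 1, fun j _ => by fin_cases j <;> simp [fderiv_g16_zero_apply]⟩

theorem hessQ_nonneg_on_critSubI_iff (mu : Fin 3 → ℝ) :
    (∀ d, critSubI g16 0 d → 0 ≤ hessQ (LagrI f16 g16 mu) 0 d) ↔ mu 0 ≤ mu 1 := by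
  simp only [critSubI_g16_zero_iff, hessQ_lagrI_f16_g16]
  refine ⟨fun h => ?_, fun h d _ => mul_nonneg (sub_nonneg.2 h) (sq_nonneg _)⟩
  simpa using h ![1, 1, 0] rfl

theorem stmt16 :
    (FeasI g16 (0 : Fin 3 → ℝ) ∧ IsLocalMinOn f16 {x | FeasI g16 x} (0 : Fin 3 → ℝ)) ∧
    MFCQI g16 (0 : Fin 3 → ℝ) ∧
    (∀ mu : Fin 3 → ℝ, IsLagMultI f16 g16 (0 : Fin 3 → ℝ) mu ↔
      ((∀ j, 0 ≤ mu j) ∧ mu 0 + mu 1 + 2 * mu 2 = 1)) ∧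
    ({d : Fin 3 → ℝ | critSubI g16 (0 : Fin 3 → ℝ) d} = {d : Fin 3 → ℝ | d 2 = 0}) ∧
    (∀ mu : Fin 3 → ℝ, IsLagMultI f16 g16 (0 : Fin 3 → ℝ) mu →
      ((∀ d : Fin 3 → ℝ, critSubI g16 (0 : Fin 3 → ℝ) d →
        0 ≤ hessQ (LagrI f16 g16 mu) (0 : Fin 3 → ℝ) d) ↔ mu 0 ≤ mu 1)) ∧
    (∃ mu : Fin 3 → ℝ, IsLagMultI f16 g16 (0 : Fin 3 → ℝ) mu ∧
      ∀ d : Fin 3 → ℝ, critSubI g16 (0 : Fin 3 → ℝ) d →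
        0 ≤ hessQ (LagrI f16 g16 mu) (0 : Fin 3 → ℝ) d) := by
  have hmult : IsLagMultI f16 g16 0 (Pi.single 1 1) := by
    rw [isLagMultI_f16_g16_zero_iff]
    refine ⟨fun j => ?_, by simp⟩
    fin_cases j <;> simp
  refine ⟨⟨fun j => (g16_apply_zero j).le, isMinOn_f16_zero.localize⟩, mfcqI_g16_zero,
    isLagMultI_f16_g16_zero_iff, Set.ext critSubI_g16_zero_iff,
    fun mu _ => hessQ_nonneg_on_critSubI_iff mu, Pi.single 1 1, hmult, ?_⟩
  exact (hessQ_nonneg_on_critSubI_iff _).2 (by simp)
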